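/- arXiv:math/9909182 — 6 statements merged into one kernel-verified Lean document; each statement's English description precedes it below -/
import Mathlib

section
/- Let a, b > 0 and let f, g be entire functions with ‖f‖_a < ∞ and ‖g‖_b < ∞, where ‖f‖_b := sup_{k ∈ ℕ₀} b^{-k} |f^{(k)}(0)|. Then ‖fg‖_{a+b} ≤ ‖f‖_a ‖g‖_b. -/
/-!
Leibniz' rule bounds the `k`-th derivative of `f g` at `0` by
`∑ i, (k choose i) ‖f⁽ⁱ⁾(0)‖ ‖g⁽ᵏ⁻ⁱ⁾(0)‖ ≤ ∑ i, (k choose i) aⁱ bᵏ⁻ⁱ ‖f‖_a ‖g‖_b`,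
which is `(a + b)ᵏ ‖f‖_a ‖g‖_b` by the binomial theorem.
-/

/-- The exponential-type norm ‖f‖_b = sup_{k} b^{-k} |f^{(k)}(0)|. -/
noncomputable def entNorm (b : ℝ) (f : ℂ → ℂ) : ℝ :=
  ⨆ k : ℕ, b⁻¹ ^ k * ‖iteratedDeriv k f 0‖

open Finset

section Leibniz

variable {𝕜 A : Type*} [NontriviallyNormedField 𝕜] [NormedRing A] [NormedAlgebra 𝕜 A]

theorem norm_iteratedDeriv_mul_le {f g : 𝕜 → A} {N : WithTop ℕ∞} (hf : ContDiff 𝕜 N f)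
    (hg : ContDiff 𝕜 N g) (x : 𝕜) {n : ℕ} (hn : n ≤ N) :
    ‖iteratedDeriv n (fun y => f y * g y) x‖ ≤ ∑ i ∈ range (n + 1),
      (n.choose i : ℝ) * ‖iteratedDeriv i f x‖ * ‖iteratedDeriv (n - i) g x‖ := by
  simpa only [norm_iteratedFDeriv_eq_norm_iteratedDeriv] using norm_iteratedFDeriv_mul_le hf hg x hn

theorem norm_iteratedDeriv_mul_le_add_pow_mul {f g : 𝕜 → A} {x : 𝕜} {n : ℕ}
    (hf : ContDiff 𝕜 n f) (hg : ContDiff 𝕜 n g) {a b Mf Mg : ℝ}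
    (hMf : ∀ i, ‖iteratedDeriv i f x‖ ≤ a ^ i * Mf)
    (hMg : ∀ i, ‖iteratedDeriv i g x‖ ≤ b ^ i * Mg) :
    ‖iteratedDeriv n (fun y => f y * g y) x‖ ≤ (a + b) ^ n * (Mf * Mg) := by
  refine (norm_iteratedDeriv_mul_le hf hg x le_rfl).trans ?_
  rw [add_pow, sum_mul]
  refine sum_le_sum fun i _ => ?_
  calc (n.choose i : ℝ) * ‖iteratedDeriv i f x‖ * ‖iteratedDeriv (n - i) g x‖
      ≤ n.choose i * (a ^ i * Mf) * (b ^ (n - i) * Mg) :=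
        mul_le_mul (mul_le_mul_of_nonneg_left (hMf i) (Nat.cast_nonneg _)) (hMg (n - i))
          (norm_nonneg _) (mul_nonneg (Nat.cast_nonneg _) ((norm_nonneg _).trans (hMf i)))
    _ = a ^ i * b ^ (n - i) * n.choose i * (Mf * Mg) := by ring

end Leibniz

theorem norm_iteratedDeriv_le_pow_mul_entNorm {a : ℝ} (ha : 0 < a) {f : ℂ → ℂ}
    (hf : BddAbove (Set.range fun k : ℕ => a⁻¹ ^ k * ‖iteratedDeriv k f 0‖)) (k : ℕ) :
    ‖iteratedDeriv k f 0‖ ≤ a ^ k * entNorm a f := by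
  rw [← inv_mul_le_iff₀ (pow_pos ha k), ← inv_pow]
  exact le_ciSup hf k

/-- For entire f, g with ‖f‖_a, ‖g‖_b finite (a, b > 0), ‖fg‖_{a+b} ≤ ‖f‖_a ‖g‖_b. -/
theorem stmt1 (a b : ℝ) (ha : 0 < a) (hb : 0 < b) (f g : ℂ → ℂ)
    (hf : Differentiable ℂ f) (hg : Differentiable ℂ g)
    (hfa : BddAbove (Set.range fun k : ℕ => a⁻¹ ^ k * ‖iteratedDeriv k f 0‖))
    (hgb : BddAbove (Set.range fun k : ℕ => b⁻¹ ^ k * ‖iteratedDeriv k g 0‖)) :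
    BddAbove (Set.range fun k : ℕ =>
        (a + b)⁻¹ ^ k * ‖iteratedDeriv k (fun z => f z * g z) 0‖) ∧
    entNorm (a + b) (fun z => f z * g z) ≤ entNorm a f * entNorm b g := by
  have hbound : ∀ k : ℕ, (a + b)⁻¹ ^ k * ‖iteratedDeriv k (fun z => f z * g z) 0‖ ≤
      entNorm a f * entNorm b g := by
    intro k
    rw [inv_pow, inv_mul_le_iff₀ (pow_pos (add_pos ha hb) k)]
    exact norm_iteratedDeriv_mul_le_add_pow_mul hf.contDiff hg.contDiff
      (norm_iteratedDeriv_le_pow_mul_entNorm ha hfa) (norm_iteratedDeriv_le_pow_mul_entNorm hb hgb)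
  exact ⟨⟨_, Set.forall_mem_range.2 hbound⟩, ciSup_le hbound⟩
end

section
/- Let f(z) = C z^m exp(αz) ∏_{j=1}^∞ (1 + γ_j z) with C > 0, m = 0, α ≥ 0, γ_j ≥ γ_{j+1} ≥ 0, ∑ γ_j < ∞, and f(0) = C > 0. Let φ = log f in a neighborhood of 0 and φ^{(k)} = (D^k φ)(0). Then (-1)^{k-1} φ^{(k)} ≥ 0 for all k ∈ ℕ. -/
/-!
Near `0`, `φ` and `log C + α z + ∑ⱼ log (1 + γⱼ z)` have the same exponential, so they differ by a
function with values in `2πiℤ`; continuity makes it constant. Expanding each logarithm and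
interchanging the absolutely convergent double series gives
`φ⁽ᵏ⁾(0) / k! = α [k = 1] + (-1)ᵏ⁻¹ (∑ⱼ γⱼᵏ) / k`, which has the sign of `(-1)ᵏ⁻¹`.
-/

open Complex Filter Topology FormalMultilinearSeries

namespace Complex

theorem norm_pow_div_natCast_le {w : ℂ} (hw : ‖w‖ ≤ 1 / 2) (n : ℕ) :
    ‖w ^ n / n‖ ≤ 2 * ‖w‖ * (1 / 2) ^ n := by
  rcases n with _ | m
  · simp
  calc ‖w ^ (m + 1) / ↑(m + 1)‖ ≤ ‖w‖ ^ (m + 1) := by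
        rw [norm_div, norm_pow, Complex.norm_natCast]
        exact div_le_self (by positivity) (by simp)
    _ = ‖w‖ * ‖w‖ ^ m := pow_succ' _ _
    _ ≤ ‖w‖ * (1 / 2) ^ m := by gcongr
    _ = 2 * ‖w‖ * (1 / 2) ^ (m + 1) := by ring

/-- Fubini for the double series `∑ⱼ ∑ₙ (-1)ⁿ⁺¹ (γⱼ z)ⁿ / n`. -/
theorem hasSum_taylorSeries_tsum_log_one_add_mul {γ : ℕ → ℂ} {z : ℂ} (hγ : Summable γ)
    (hz : ∀ j, ‖γ j * z‖ ≤ 1 / 2) :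
    HasSum (fun n : ℕ => (-1) ^ (n + 1) * (∑' j, γ j ^ n) / n * z ^ n)
      (∑' j, log (1 + γ j * z)) := by
  set G : ℕ × ℕ → ℂ := fun q => (-1) ^ (q.2 + 1) * (γ q.1 * z) ^ q.2 / q.2
  have hG : Summable G := by
    refine Summable.of_norm_bounded
      ((hγ.norm.mul_right (2 * ‖z‖)).mul_of_nonneg summable_geometric_two
        (fun j => by positivity) (fun n => by positivity)) fun q => ?_
    calc ‖G q‖ = ‖(γ q.1 * z) ^ q.2 / q.2‖ := by simp [G, mul_div_assoc]
      _ ≤ 2 * ‖γ q.1 * z‖ * (1 / 2) ^ q.2 := norm_pow_div_natCast_le (hz q.1) q.2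
      _ = ‖γ q.1‖ * (2 * ‖z‖) * (1 / 2) ^ q.2 := by rw [norm_mul]; ring
  have hrows : HasSum (fun j => log (1 + γ j * z)) (∑' q, G q) :=
    hG.hasSum.prod_fiberwise fun j => by
      dsimp only [G]
      exact hasSum_taylorSeries_log ((hz j).trans_lt (by norm_num))
  have hcols : HasSum (fun n => ∑' j, G (j, n)) (∑' q, G q) :=
    ((Equiv.prodComm ℕ ℕ).hasSum_iff.mpr hG.hasSum).prod_fiberwise fun n =>
      (hG.prod_symm.prod_factor n).hasSum
  rw [hrows.tsum_eq]
  refine hcols.congr_fun fun n => ?_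
  simp only [G, mul_pow]
  rw [← tsum_mul_left, ← tsum_div_const, ← tsum_mul_right]
  exact tsum_congr fun j => by ring

theorem eventuallyEq_const_add_of_cexp_eq_cexp {X : Type*} [TopologicalSpace X] {φ ψ : X → ℂ}
    {x : X} (hφ : ContinuousAt φ x) (hψ : ContinuousAt ψ x)
    (h : ∀ᶠ z in 𝓝 x, cexp (φ z) = cexp (ψ z)) :
    φ =ᶠ[𝓝 x] fun z => (φ x - ψ x) + ψ z := by
  set w : X → ℂ := fun z => φ z - ψ z - (φ x - ψ x)
  have hw : Tendsto w (𝓝 x) (𝓝 0) := by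
    have hwc : ContinuousAt w x := (hφ.sub hψ).sub continuousAt_const
    simpa [w] using hwc.tendsto
  filter_upwards [h, hw.eventually (Metric.ball_mem_nhds 0 Real.pi_pos)] with z hz hwz
  rw [dist_zero_right] at hwz
  have him := (abs_lt.mp ((abs_im_le_norm (w z)).trans_lt hwz))
  have hw0 : w z = 0 := by
    refine exp_inj_of_neg_pi_lt_of_le_pi him.1 him.2.le (by simp [Real.pi_pos])
      (by simp [Real.pi_pos.le]) ?_
    simp [w, exp_sub, hz, h.self_of_nhds]
  linear_combination hw0

end Complex

theorem HasFPowerSeriesOnBall.iteratedDeriv_eq_factorial_mul {𝕜 : Type*}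
    [NontriviallyNormedField 𝕜] [CompleteSpace 𝕜] {c : ℕ → 𝕜} {f : 𝕜 → 𝕜} {x : 𝕜} {r : ENNReal}
    (hf : HasFPowerSeriesOnBall f (ofScalars 𝕜 c) x r) (n : ℕ) :
    iteratedDeriv n f x = n.factorial * c n := by
  rw [iteratedDeriv_eq_iteratedFDeriv, ← hf.factorial_smul 1, ofScalars_apply_eq]
  simp [nsmul_eq_mul]

theorem exists_pos_forall_norm_mul_le_half {γ : ℕ → ℂ} (hγ : Summable γ) :
    ∃ r : NNReal, 0 < r ∧ ∀ j, ‖γ j‖ * r ≤ 1 / 2 := by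
  set B := ∑' j, ‖γ j‖
  have hB : 0 ≤ B := tsum_nonneg fun j => norm_nonneg _
  refine ⟨(2 * (B + 1))⁻¹.toNNReal, Real.toNNReal_pos.mpr (by positivity), fun j => ?_⟩
  rw [Real.coe_toNNReal _ (by positivity)]
  have hj : ‖γ j‖ ≤ B + 1 := (hγ.norm.le_tsum j fun _ _ => norm_nonneg _).trans (by linarith)
  calc ‖γ j‖ * (2 * (B + 1))⁻¹ ≤ (B + 1) * (2 * (B + 1))⁻¹ := by gcongr
    _ = 1 / 2 := by field_simp

section Laguerre

variable (α : ℝ) (γ : ℕ → ℝ)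

/-- The Taylor coefficients at `0` of `α z + ∑ j, log (1 + γ j z)`; the power-sum term vanishes
at `n = 0` only because `x / 0 = 0`. -/
noncomputable def laguerreLogCoeff (n : ℕ) : ℝ :=
  (if n = 1 then α else 0) + (-1) ^ (n + 1) * (∑' j, γ j ^ n) / n

noncomputable def laguerreLogSeries : FormalMultilinearSeries ℂ ℂ ℂ :=
  ofScalars ℂ fun n => (laguerreLogCoeff α γ n : ℂ)

variable {α γ}

theorem neg_one_pow_mul_laguerreLogCoeff_nonneg (hα : 0 ≤ α) (hγ : ∀ j, 0 ≤ γ j) {k : ℕ}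
    (hk : 1 ≤ k) : 0 ≤ (-1) ^ (k - 1) * laguerreLogCoeff α γ k := by
  obtain ⟨m, rfl⟩ := Nat.exists_eq_add_of_le' hk
  have hsign : (-1 : ℝ) ^ m * (-1) ^ (m + 1 + 1) = 1 := by
    rw [← pow_add]; exact Even.neg_one_pow ⟨m + 1, by ring⟩
  have hS : 0 ≤ (∑' j, γ j ^ (m + 1)) / (m + 1 : ℕ) :=
    div_nonneg (tsum_nonneg fun j => pow_nonneg (hγ j) _) (Nat.cast_nonneg _)
  rw [laguerreLogCoeff, Nat.add_sub_cancel, mul_add, mul_div_assoc, ← mul_assoc, hsign, one_mul]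
  rcases eq_or_ne m 0 with rfl | hm
  · simpa using add_nonneg hα hS
  · simpa [hm] using hS

theorem hasSum_laguerreLogCoeff_mul_pow (hγ : Summable γ) {z : ℂ}
    (hz : ∀ j, ‖(γ j : ℂ) * z‖ ≤ 1 / 2) :
    HasSum (fun n => (laguerreLogCoeff α γ n : ℂ) * z ^ n)
      (α * z + ∑' j, log (1 + γ j * z)) := by
  have hlin : HasSum (fun n : ℕ => if n = 1 then (α : ℂ) * z else 0) (α * z) := hasSum_ite_eq 1 _
  refine (hlin.add (hasSum_taylorSeries_tsum_log_one_add_mul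
    (summable_ofReal.mpr hγ) hz)).congr_fun fun n => ?_
  rw [laguerreLogCoeff]
  split_ifs with hn
  · subst hn; push_cast; ring
  · push_cast; ring

theorem laguerreLogSeries_sum_eq (hγ : Summable γ) {z : ℂ}
    (hz : ∀ j, ‖(γ j : ℂ) * z‖ ≤ 1 / 2) :
    (laguerreLogSeries α γ).sum z = α * z + ∑' j, log (1 + γ j * z) := by
  rw [laguerreLogSeries, ← ofScalarsSum, ofScalars_sum_eq]
  simpa only [smul_eq_mul] using (hasSum_laguerreLogCoeff_mul_pow hγ hz).tsum_eq

theorem hasFPowerSeriesOnBall_laguerreLogSeries (hγ : Summable γ) {r : NNReal} (hr : 0 < r)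
    (hγr : ∀ j, ‖(γ j : ℂ)‖ * r ≤ 1 / 2) :
    HasFPowerSeriesOnBall (laguerreLogSeries α γ).sum (laguerreLogSeries α γ) 0 r := by
  have hz : ∀ j, ‖(γ j : ℂ) * (r : ℂ)‖ ≤ 1 / 2 := fun j => by simpa using hγr j
  have hrad : (r : ENNReal) ≤ (laguerreLogSeries α γ).radius := by
    refine le_radius_of_tendsto _ (l := 0) ?_
    simpa [laguerreLogSeries, ofScalars_norm] using
      (hasSum_laguerreLogCoeff_mul_pow (α := α) hγ hz).summable.tendsto_atTop_zero.norm
  exact ((laguerreLogSeries α γ).hasFPowerSeriesOnBall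
    ((ENNReal.coe_pos.mpr hr).trans_le hrad)).mono (ENNReal.coe_pos.mpr hr) hrad

theorem cexp_log_add_laguerreLogSeries_sum {C : ℝ} (hC : 0 < C) (hγ : Summable γ) {z : ℂ}
    (hz : ∀ j, ‖(γ j : ℂ) * z‖ ≤ 1 / 2) :
    cexp (Real.log C + (laguerreLogSeries α γ).sum z)
      = C * cexp (α * z) * ∏' j, (1 + (γ j : ℂ) * z) := by
  have hne : ∀ j, 1 + (γ j : ℂ) * z ≠ 0 := fun j h => by
    have := hz j
    rw [eq_neg_of_add_eq_zero_right h, norm_neg, norm_one] at this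
    norm_num at this
  rw [laguerreLogSeries_sum_eq hγ hz, exp_add, exp_add, ← ofReal_exp, Real.exp_log hC,
    cexp_tsum_eq_tprod hne (summable_log_one_add_of_summable
      ((summable_ofReal.mpr hγ).mul_right z)), mul_assoc]

end Laguerre

theorem stmt3_general (C α : ℝ) (γ : ℕ → ℝ) (hC : 0 < C) (hα : 0 ≤ α)
    (hγ : ∀ j, 0 ≤ γ j) (hsum : Summable γ)
    (φ : ℂ → ℂ) (hφa : AnalyticAt ℂ φ 0)
    (hφ : ∀ᶠ z in nhds (0 : ℂ), Complex.exp (φ z)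
        = (C : ℂ) * Complex.exp ((α : ℂ) * z) * ∏' j, (1 + (γ j : ℂ) * z)) :
    ∀ k : ℕ, 1 ≤ k → (iteratedDeriv k φ 0).im = 0 ∧
      0 ≤ (-1 : ℝ) ^ (k - 1) * (iteratedDeriv k φ 0).re := by
  obtain ⟨r, hr, hγr⟩ := exists_pos_forall_norm_mul_le_half (summable_ofReal.mpr hsum)
  set p := laguerreLogSeries α γ
  have hp : HasFPowerSeriesOnBall p.sum p 0 r :=
    hasFPowerSeriesOnBall_laguerreLogSeries hsum hr hγr
  have hexp : ∀ᶠ z in 𝓝 0, cexp (φ z) = cexp (Real.log C + p.sum z) := by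
    filter_upwards [hφ, Metric.ball_mem_nhds (0 : ℂ) hr] with z hφz hz
    have hγz : ∀ j, ‖(γ j : ℂ) * z‖ ≤ 1 / 2 := fun j => calc
      ‖(γ j : ℂ) * z‖ = ‖(γ j : ℂ)‖ * ‖z‖ := norm_mul _ _
      _ ≤ ‖(γ j : ℂ)‖ * r := by gcongr; exact (mem_ball_zero_iff.mp hz).le
      _ ≤ 1 / 2 := hγr j
    rw [hφz, cexp_log_add_laguerreLogSeries_sum hC hsum hγz]
  have hφψ := eventuallyEq_const_add_of_cexp_eq_cexp (ψ := fun z => Real.log C + p.sum z)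
    hφa.continuousAt (continuousAt_const.add hp.analyticAt.continuousAt) hexp
  intro k hk
  have hderiv : iteratedDeriv k φ 0 = ((k.factorial * laguerreLogCoeff α γ k : ℝ) : ℂ) := by
    rw [hφψ.iteratedDeriv_eq, iteratedDeriv_const_add hk, iteratedDeriv_const_add hk,
      hp.iteratedDeriv_eq_factorial_mul]
    push_cast
    rfl
  rw [hderiv, ofReal_im, ofReal_re, mul_left_comm]
  exact ⟨rfl, mul_nonneg (Nat.cast_nonneg _) (neg_one_pow_mul_laguerreLogCoeff_nonneg hα hγ hk)⟩

/-- The sign rule: for a Laguerre entire function f(z) = C e^{αz} ∏ (1+γ_j z) with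
C > 0, α ≥ 0, γ_j ≥ γ_{j+1} ≥ 0 summable, and φ = log f near 0 (analytic there),
the derivatives φ^{(k)}(0) are real and (-1)^{k-1} φ^{(k)}(0) ≥ 0 for k ≥ 1. -/
theorem stmt3 (C α : ℝ) (γ : ℕ → ℝ) (hC : 0 < C) (hα : 0 ≤ α)
    (hγ : ∀ j, 0 ≤ γ j) (hmono : Antitone γ) (hsum : Summable γ)
    (φ : ℂ → ℂ) (hφa : AnalyticAt ℂ φ 0)
    (hφ : ∀ᶠ z in nhds (0 : ℂ), Complex.exp (φ z)
        = (C : ℂ) * Complex.exp ((α : ℂ) * z) * ∏' j, (1 + (γ j : ℂ) * z)) :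
    ∀ k : ℕ, 1 ≤ k → (iteratedDeriv k φ 0).im = 0 ∧
      0 ≤ (-1 : ℝ) ^ (k - 1) * (iteratedDeriv k φ 0).re :=
  stmt3_general C α γ hC hα hγ hsum φ hφa hφ
end

section
/- Let f(z) = C z^m e^{αz} ∏_j (1 + γ_j z) be a Laguerre entire function with C > 0, m = 0, α ≥ 0, γ_j ≥ 0 decreasing, ∑ γ_j < ∞. If (D^k log f)(0) = 0 for all k ≥ 2, then f(z) = C exp(az) for some a ≥ 0. -/
/-!
Near `0` the vanishing of the higher derivatives makes `φ` affine, so that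
`∏ (1 + γ j z) = exp (β z)` there. Multiplying the values at `x` and `-x` gives
`∏ (1 - (γ j x) ^ 2) = 1` for small real `x > 0`; but once `|γ j x| ≤ 1` for all `j`, the factors
lie in `[0, 1]`, so the product is at most each single factor, forcing `γ j x = 0`.
-/

open Filter Topology

theorem AnalyticAt.eventually_eq_add_smul_of_iteratedDeriv_eq_zero {E : Type*}
    [NormedAddCommGroup E] [NormedSpace ℂ E] [CompleteSpace E] {f : ℂ → E} {c : ℂ}
    (hf : AnalyticAt ℂ f c) (h : ∀ k, 2 ≤ k → iteratedDeriv k f c = 0) :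
    ∀ᶠ z in 𝓝 c, f z = f c + (z - c) • deriv f c := by
  obtain ⟨r, hr, hfr⟩ := hf.exists_ball_analyticOnNhd
  filter_upwards [Metric.ball_mem_nhds c hr] with z hz
  have htaylor := Complex.hasSum_taylorSeries_on_ball hfr.differentiableOn hz
  have hfinite : HasSum (fun n : ℕ ↦ (n.factorial : ℂ)⁻¹ • (z - c) ^ n • iteratedDeriv n f c)
      (∑ n ∈ Finset.range 2, (n.factorial : ℂ)⁻¹ • (z - c) ^ n • iteratedDeriv n f c) :=
    hasSum_sum_of_ne_finset_zero fun n hn ↦ by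
      rw [h n (by simp at hn; omega), smul_zero, smul_zero]
  simpa [Finset.sum_range_succ] using htaylor.unique hfinite

theorem HasProd.le_of_nonneg_of_le_one {ι : Type*} {f : ι → ℝ} {p : ℝ} (hf : HasProd f p)
    (h0 : ∀ j, 0 ≤ f j) (h1 : ∀ j, f j ≤ 1) (k : ι) : p ≤ f k := by
  classical
  refine le_of_tendsto hf (eventually_ge_atTop {k} |>.mono fun s hs ↦ ?_)
  rw [← Finset.mul_prod_erase s f (hs (Finset.mem_singleton_self k))]
  exact mul_le_of_le_one_right (h0 k) (Finset.prod_le_one (fun j _ ↦ h0 j) fun j _ ↦ h1 j)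

theorem Complex.hasProd_ofReal {ι : Type*} {f : ι → ℝ} {a : ℝ} :
    HasProd (fun j ↦ (f j : ℂ)) a ↔ HasProd f a :=
  Complex.isometry_ofReal.isEmbedding.isInducing.hasProd_iff (g := Complex.ofRealHom) f a

theorem eq_zero_of_eventually_hasProd_one_sub_sq_mul {ι : Type*} {γ : ι → ℝ} (hγ : Summable γ)
    (h : ∀ᶠ x in 𝓝[>] 0, HasProd (fun j ↦ 1 - (γ j * x) ^ 2) 1) : γ = 0 := by
  set S := ∑' j, |γ j|
  have hS : ∀ j, |γ j| ≤ S := fun j ↦ hγ.abs.le_tsum j fun _ _ ↦ abs_nonneg _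
  have hsmall : ∀ᶠ x in 𝓝[>] (0 : ℝ), x * S < 1 :=
    nhdsWithin_le_nhds <|
      (continuous_id.mul continuous_const).tendsto' 0 0 (zero_mul S) |>.eventually_lt_const one_pos
  obtain ⟨x, hprod, hxS, hx⟩ := (h.and (hsmall.and self_mem_nhdsWithin)).exists
  have hfactor : ∀ j, (γ j * x) ^ 2 ≤ 1 := fun j ↦ by
    rw [sq_le_one_iff_abs_le_one, abs_mul, abs_of_pos hx]
    nlinarith [hS j]
  funext k
  have := hprod.le_of_nonneg_of_le_one (fun j ↦ sub_nonneg.2 (hfactor j))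
    (fun j ↦ sub_le_self _ (sq_nonneg _)) k
  have hk : γ k * x = 0 := by nlinarith [sq_nonneg (γ k * x)]
  simpa [hx.ne'] using hk

theorem Complex.eventually_hasProd_one_sub_sq_mul_of_tprod_eq_exp {ι : Type*} {γ : ι → ℂ}
    (hγ : Summable fun j ↦ ‖γ j‖) {β : ℂ}
    (h : ∀ᶠ z in 𝓝 0, ∏' j, (1 + γ j * z) = exp (β * z)) :
    ∀ᶠ z in 𝓝 0, HasProd (fun j ↦ 1 - (γ j * z) ^ 2) 1 := by
  have hneg : ∀ᶠ z in 𝓝 (0 : ℂ), ∏' j, (1 + γ j * -z) = exp (β * -z) :=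
    (continuous_neg.tendsto' 0 0 neg_zero).eventually h
  filter_upwards [h, hneg] with z hz hz'
  have hone_add : ∀ w : ℂ, Multipliable fun j ↦ 1 + γ j * w := fun w ↦
    multipliable_one_add_of_summable (by simpa [norm_mul] using hγ.mul_right ‖w‖)
  convert ((hone_add z).hasProd.mul (hone_add (-z)).hasProd) using 1
  · funext j
    ring
  · rw [hz, hz', ← exp_add, ← mul_add, add_neg_cancel, mul_zero, exp_zero]

theorem stmt4_general (C α : ℝ) (γ : ℕ → ℝ) (hα : 0 ≤ α)
    (hsum : Summable γ)
    (φ : ℂ → ℂ) (hφa : AnalyticAt ℂ φ 0)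
    (hφ : ∀ᶠ z in nhds (0 : ℂ), Complex.exp (φ z)
        = (C : ℂ) * Complex.exp ((α : ℂ) * z) * ∏' j, (1 + (γ j : ℂ) * z))
    (hvanish : ∀ k : ℕ, 2 ≤ k → iteratedDeriv k φ 0 = 0) :
    ∃ a : ℝ, 0 ≤ a ∧ ∀ z : ℂ,
      (C : ℂ) * Complex.exp ((α : ℂ) * z) * (∏' j, (1 + (γ j : ℂ) * z))
        = (C : ℂ) * Complex.exp ((a : ℂ) * z) := by
  have hφ0 : Complex.exp (φ 0) = C := by simpa using hφ.self_of_nhds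
  have hprod : ∀ᶠ z in 𝓝 (0 : ℂ),
      ∏' j, (1 + (γ j : ℂ) * z) = Complex.exp ((deriv φ 0 - α) * z) := by
    filter_upwards [hφ, hφa.eventually_eq_add_smul_of_iteratedDeriv_eq_zero hvanish]
      with z hz haff
    have hC : (C : ℂ) ≠ 0 := hφ0 ▸ Complex.exp_ne_zero _
    refine mul_left_cancel₀ (mul_ne_zero hC (Complex.exp_ne_zero (α * z))) ?_
    rw [← hz, haff, ← hφ0, mul_assoc, ← Complex.exp_add, ← Complex.exp_add]
    ring_nf
  have hsq := Complex.eventually_hasProd_one_sub_sq_mul_of_tprod_eq_exp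
    (by simpa using hsum.abs) hprod
  have hγ : γ = 0 := eq_zero_of_eventually_hasProd_one_sub_sq_mul hsum <| nhdsWithin_le_nhds <|
    ((Complex.continuous_ofReal.tendsto' 0 0 Complex.ofReal_zero).eventually hsq).mono
      fun x hx ↦ Complex.hasProd_ofReal.1 (by exact_mod_cast hx)
  exact ⟨α, hα, fun z ↦ by simp [hγ]⟩

/-- For a Laguerre entire function f(z) = C e^{αz} ∏ (1+γ_j z) with C > 0, α ≥ 0,
γ_j decreasing, nonnegative, summable: if the logarithm φ of f near 0 has
(D^k φ)(0) = 0 for all k ≥ 2, then f(z) = C exp(a z) for some a ≥ 0. -/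
theorem stmt4 (C α : ℝ) (γ : ℕ → ℝ) (hC : 0 < C) (hα : 0 ≤ α)
    (hγ : ∀ j, 0 ≤ γ j) (hmono : Antitone γ) (hsum : Summable γ)
    (φ : ℂ → ℂ) (hφa : AnalyticAt ℂ φ 0)
    (hφ : ∀ᶠ z in nhds (0 : ℂ), Complex.exp (φ z)
        = (C : ℂ) * Complex.exp ((α : ℂ) * z) * ∏' j, (1 + (γ j : ℂ) * z))
    (hvanish : ∀ k : ℕ, 2 ≤ k → iteratedDeriv k φ 0 = 0) :
    ∃ a : ℝ, 0 ≤ a ∧ ∀ z : ℂ,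
      (C : ℂ) * Complex.exp ((α : ℂ) * z) * (∏' j, (1 + (γ j : ℂ) * z))
        = (C : ℂ) * Complex.exp ((a : ℂ) * z) :=
  stmt4_general C α γ hα hsum φ hφa hφ hvanish
end

section
/- Let f_n be entire functions of the form f_n(z) = C_n ∏_j (1 + γ_{n,j} z) e^{α_n z} with C_n > 0, γ_{n,j} ≥ 0, ∑_j γ_{n,j} < ∞, α_n ≥ 0. Suppose φ_n^{(0)} = log C_n → φ^{(0)}, φ_n^{(1)} = α_n + ∑_j γ_{n,j} → φ^{(1)}, and φ_n^{(2)} = -∑_j γ_{n,j}² → 0. Then f_n converges uniformly on compact subsets of ℂ to exp(φ^{(0)} + φ^{(1)} z). -/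
/-!
Where `‖z‖² ∑ γⱼ² ≤ 1/4`, every `‖γⱼ z‖ ≤ 1/2`, so `log (1 + γⱼ z) = γⱼ z + O(‖γⱼ z‖²)` and
`fₙ z = exp (log Cₙ + (αₙ + ∑ γₙⱼ) z + Eₙ z)` with `‖Eₙ z‖ ≤ ‖z‖² ∑ γₙⱼ²`. On a compact set the
exponents therefore converge uniformly to `φ⁰ + φ¹ z`, whose real part is bounded there, and
`exp` preserves such uniform convergence.
-/

open Filter Complex Topology Bornology

theorem Real.summable_sq_of_summable {ι : Type*} {f : ι → ℝ} (hf : Summable f) :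
    Summable fun i => f i ^ 2 := by
  refine hf.abs.of_norm_bounded_eventually ?_
  filter_upwards [hf.abs.tendsto_cofinite_zero.eventually_le_const one_pos] with i hi
  rw [Real.norm_eq_abs, abs_pow, sq]
  exact mul_le_of_le_one_left (abs_nonneg _) hi

theorem Metric.tendstoUniformlyOn_of_dist_le {ι α β : Type*} [PseudoMetricSpace α]
    {F : ι → β → α} {f : β → α} {p : Filter ι} {s : Set β} {u : ι → ℝ}
    (hu : Tendsto u p (𝓝 0)) (h : ∀ᶠ n in p, ∀ x ∈ s, dist (f x) (F n x) ≤ u n) :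
    TendstoUniformlyOn F f p s := by
  rw [Metric.tendstoUniformlyOn_iff]
  intro ε hε
  filter_upwards [h, hu.eventually (gt_mem_nhds hε)] with n hn hun x hx
  exact (hn x hx).trans_lt hun

theorem Bornology.IsBounded.eventually_norm_sq_mul_le {ι E : Type*} [SeminormedAddCommGroup E]
    {K : Set E} (hK : IsBounded K) {q : ι → ℝ} {l : Filter ι} (hq : Tendsto q l (𝓝 0))
    {ε : ℝ} (hε : 0 < ε) : ∀ᶠ n in l, ∀ z ∈ K, ‖z‖ ^ 2 * q n ≤ ε := by
  obtain ⟨R, hR⟩ := hK.exists_norm_le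
  filter_upwards [(hq.abs.const_mul (R ^ 2)).eventually_le_const
    (by simpa using hε : R ^ 2 * |(0 : ℝ)| < ε)] with n hn z hz
  calc ‖z‖ ^ 2 * q n ≤ ‖z‖ ^ 2 * |q n| := by gcongr; exact le_abs_self _
    _ ≤ R ^ 2 * |q n| := by gcongr; exact hR z hz
    _ ≤ ε := hn

theorem Bornology.IsBounded.tendstoUniformlyOn_add_mul {ι 𝕜 : Type*} [SeminormedRing 𝕜]
    {K : Set 𝕜} (hK : IsBounded K) {a b : ι → 𝕜} {a₀ b₀ : 𝕜} {l : Filter ι}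
    (ha : Tendsto a l (𝓝 a₀)) (hb : Tendsto b l (𝓝 b₀)) :
    TendstoUniformlyOn (fun n z => a n + b n * z) (fun z => a₀ + b₀ * z) l K := by
  obtain ⟨R, hR⟩ := hK.exists_norm_le
  refine Metric.tendstoUniformlyOn_of_dist_le (u := fun n => ‖a₀ - a n‖ + ‖b₀ - b n‖ * R)
    ?_ (Eventually.of_forall fun n z hz => ?_)
  · simpa using ((ha.const_sub a₀).norm.add ((hb.const_sub b₀).norm.mul_const R))
  · rw [dist_eq_norm, show a₀ + b₀ * z - (a n + b n * z) = (a₀ - a n) + (b₀ - b n) * z by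
      noncomm_ring]
    calc ‖(a₀ - a n) + (b₀ - b n) * z‖ ≤ ‖a₀ - a n‖ + ‖b₀ - b n‖ * ‖z‖ :=
          (norm_add_le _ _).trans (by gcongr; exact norm_mul_le _ _)
      _ ≤ ‖a₀ - a n‖ + ‖b₀ - b n‖ * R := by gcongr; exact hR z hz

namespace Complex

variable {ι : Type*}

theorem norm_log_one_add_sub_self_le_sq {z : ℂ} (hz : ‖z‖ ≤ 1 / 2) :
    ‖log (1 + z) - z‖ ≤ ‖z‖ ^ 2 := by
  refine (norm_log_one_add_sub_self_le (hz.trans_lt one_half_lt_one)).trans ?_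
  have h2 : (1 - ‖z‖)⁻¹ ≤ 2 := by
    rw [inv_le_comm₀ (by linarith) two_pos]
    linarith
  calc ‖z‖ ^ 2 * (1 - ‖z‖)⁻¹ / 2 ≤ ‖z‖ ^ 2 * 2 / 2 := by gcongr
    _ = ‖z‖ ^ 2 := by ring

theorem tprod_one_add_eq_cexp_tsum_log {w : ι → ℂ} (hw : Summable w) (hsmall : ∀ i, ‖w i‖ < 1) :
    ∏' i, (1 + w i) = exp (∑' i, log (1 + w i)) := by
  refine (cexp_tsum_eq_tprod (fun i h => ?_) (summable_log_one_add_of_summable hw)).symm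
  have := hsmall i
  rw [eq_neg_of_add_eq_zero_right h, norm_neg, norm_one] at this
  exact lt_irrefl _ this

theorem norm_tsum_log_one_add_sub_tsum_le {w : ι → ℂ} (hw : Summable w)
    (hsmall : ∀ i, ‖w i‖ ≤ 1 / 2) :
    ‖∑' i, log (1 + w i) - ∑' i, w i‖ ≤ ∑' i, ‖w i‖ ^ 2 := by
  have hsq : Summable fun i => ‖w i‖ ^ 2 :=
    hw.norm.of_nonneg_of_le (fun _ => by positivity) fun i => by
      nlinarith [hsmall i, norm_nonneg (w i)]
  rw [← (summable_log_one_add_of_summable hw).tsum_sub hw]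
  exact tsum_of_norm_bounded hsq.hasSum fun i => norm_log_one_add_sub_self_le_sq (hsmall i)

section RealZeros

variable {γ : ι → ℝ} {z : ℂ}

theorem norm_ofReal_mul_le_half (hγ : Summable γ) (hz : ‖z‖ ^ 2 * ∑' i, γ i ^ 2 ≤ 1 / 4)
    (i : ι) : ‖(γ i : ℂ) * z‖ ≤ 1 / 2 := by
  have hγi : γ i ^ 2 ≤ ∑' i, γ i ^ 2 :=
    (Real.summable_sq_of_summable hγ).le_tsum i fun j _ => sq_nonneg _
  refine (pow_le_pow_iff_left₀ (norm_nonneg _) (by norm_num) two_ne_zero).1 ?_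
  calc ‖(γ i : ℂ) * z‖ ^ 2 = ‖z‖ ^ 2 * γ i ^ 2 := by
        rw [norm_mul, norm_real, Real.norm_eq_abs, mul_pow, sq_abs, mul_comm]
    _ ≤ ‖z‖ ^ 2 * ∑' i, γ i ^ 2 := by gcongr
    _ ≤ (1 / 2) ^ 2 := by linarith

theorem ofReal_mul_tprod_mul_cexp_eq {c α : ℝ} (hc : 0 < c) (hγ : Summable γ)
    (hz : ‖z‖ ^ 2 * ∑' i, γ i ^ 2 ≤ 1 / 4) :
    (c : ℂ) * (∏' i, (1 + (γ i : ℂ) * z)) * exp (α * z) =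
      exp (Real.log c + α * z + ∑' i, log (1 + γ i * z)) := by
  rw [tprod_one_add_eq_cexp_tsum_log ((summable_ofReal.2 hγ).mul_right z)
    fun i => (norm_ofReal_mul_le_half hγ hz i).trans_lt one_half_lt_one,
    exp_add, exp_add, ← ofReal_exp, Real.exp_log hc]
  ring

theorem norm_tsum_log_one_add_ofReal_mul_sub_le (hγ : Summable γ)
    (hz : ‖z‖ ^ 2 * ∑' i, γ i ^ 2 ≤ 1 / 4) :
    ‖∑' i, log (1 + γ i * z) - (∑' i, γ i : ℝ) * z‖ ≤ ‖z‖ ^ 2 * ∑' i, γ i ^ 2 := by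
  have h := norm_tsum_log_one_add_sub_tsum_le ((summable_ofReal.2 hγ).mul_right z)
    (norm_ofReal_mul_le_half hγ hz)
  simpa only [tsum_mul_right, ← ofReal_tsum, norm_mul, norm_real, Real.norm_eq_abs, mul_pow,
    sq_abs, tsum_mul_left, mul_comm (‖z‖ ^ 2)] using h

end RealZeros

theorem tendstoUniformlyOn_tsum_log_one_add_ofReal_mul_sub {κ : Type*} {γ : κ → ι → ℝ}
    {l : Filter κ} (hγ : ∀ n, Summable (γ n))
    (hγ2 : Tendsto (fun n => ∑' i, γ n i ^ 2) l (𝓝 0)) {K : Set ℂ} (hK : IsBounded K) :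
    TendstoUniformlyOn (fun n z => ∑' i, log (1 + γ n i * z) - (∑' i, γ n i : ℝ) * z) 0 l K := by
  obtain ⟨R, hR⟩ := hK.exists_norm_le
  refine Metric.tendstoUniformlyOn_of_dist_le (u := fun n => R ^ 2 * ∑' i, γ n i ^ 2)
    (by simpa using hγ2.const_mul (R ^ 2)) ?_
  filter_upwards [hK.eventually_norm_sq_mul_le hγ2 (by norm_num : (0 : ℝ) < 1 / 4)]
    with n hn z hz
  rw [Pi.zero_apply, dist_zero_left]
  refine (norm_tsum_log_one_add_ofReal_mul_sub_le (hγ n) (hn z hz)).trans ?_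
  have hQ : 0 ≤ ∑' i, γ n i ^ 2 := tsum_nonneg fun i => sq_nonneg _
  have hzR := hR z hz
  gcongr

end Complex

theorem stmt6_general (C α : ℕ → ℝ) (γ : ℕ → ℕ → ℝ) (φ0 φ1 : ℝ)
    (hC : ∀ n, 0 < C n)
    (hsum : ∀ n, Summable (γ n))
    (h0 : Filter.Tendsto (fun n => Real.log (C n)) Filter.atTop (nhds φ0))
    (h1 : Filter.Tendsto (fun n => α n + ∑' j, γ n j) Filter.atTop (nhds φ1))
    (h2 : Filter.Tendsto (fun n => ∑' j, (γ n j) ^ 2) Filter.atTop (nhds 0)) :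
    TendstoLocallyUniformly
      (fun n z => (C n : ℂ) * (∏' j, (1 + (γ n j : ℂ) * z)) * Complex.exp ((α n : ℂ) * z))
      (fun z => Complex.exp ((φ0 : ℂ) + (φ1 : ℂ) * z)) Filter.atTop := by
  rw [tendstoLocallyUniformly_iff_forall_isCompact]
  intro K hK
  have hL := (hK.isBounded.tendstoUniformlyOn_add_mul
    ((continuous_ofReal.tendsto _).comp h0) ((continuous_ofReal.tendsto _).comp h1)).add
    (tendstoUniformlyOn_tsum_log_one_add_ofReal_mul_sub hsum h2 hK.isBounded)
  rw [add_zero] at hL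
  refine (hL.comp_cexp (hK.bddAbove_image (by fun_prop))).congr ?_
  filter_upwards [hK.isBounded.eventually_norm_sq_mul_le h2 (by norm_num : (0 : ℝ) < 1 / 4)]
    with n hn z hz
  simp only [Function.comp_apply, Pi.add_apply]
  rw [ofReal_mul_tprod_mul_cexp_eq (hC n) (hsum n) (hn z hz)]
  congr 1
  push_cast
  ring

/-- Convergence lemma: if f_n(z) = C_n ∏_j (1+γ_{n,j} z) e^{α_n z} with
log C_n → φ⁰, α_n + ∑_j γ_{n,j} → φ¹ and ∑_j γ_{n,j}² → 0, then f_n converges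
uniformly on compact subsets of ℂ to exp(φ⁰ + φ¹ z). -/
theorem stmt6 (C α : ℕ → ℝ) (γ : ℕ → ℕ → ℝ) (φ0 φ1 : ℝ)
    (hC : ∀ n, 0 < C n) (hα : ∀ n, 0 ≤ α n) (hγ : ∀ n j, 0 ≤ γ n j)
    (hsum : ∀ n, Summable (γ n))
    (h0 : Filter.Tendsto (fun n => Real.log (C n)) Filter.atTop (nhds φ0))
    (h1 : Filter.Tendsto (fun n => α n + ∑' j, γ n j) Filter.atTop (nhds φ1))
    (h2 : Filter.Tendsto (fun n => ∑' j, (γ n j) ^ 2) Filter.atTop (nhds 0)) :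
    TendstoLocallyUniformly
      (fun n z => (C n : ℂ) * (∏' j, (1 + (γ n j : ℂ) * z)) * Complex.exp ((α n : ℂ) * z))
      (fun z => Complex.exp ((φ0 : ℂ) + (φ1 : ℂ) * z)) Filter.atTop :=
  stmt6_general C α γ φ0 φ1 hC hsum h0 h1 h2
end

section
/- Let θ ≥ 0 and Δ_θ f(z) = θ f'(z) + z f''(z). For every entire f with ‖f‖_a < ∞ for some a > 0, every t > 0 with a t < 1, and b = a/(1 - a t), the series (exp(tΔ_θ)f)(z) = ∑_{k≥0} (t^k/k!) (Δ_θ^k f)(z) converges and ‖exp(tΔ_θ)f‖_b ≤ (1 - a t)^{-θ} ‖f‖_a, where ‖f‖_b = sup_k b^{-k}|f^{(k)}(0)|. -/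
/-- The operator Δ_θ f = θ f' + z f''. -/
noncomputable def Dop (θ : ℝ) (f : ℂ → ℂ) : ℂ → ℂ :=
  fun z => (θ : ℂ) * deriv f z + z * deriv (deriv f) z

/-!
At the origin Δ_θ acts on Taylor coefficients by `(Δ_θ g)⁽ⁿ⁾(0) = (θ + n) g⁽ⁿ⁺¹⁾(0)`, hence
`(Δ_θᵏ f)⁽ⁿ⁾(0) = (θ + n)ₖ f⁽ⁿ⁺ᵏ⁾(0)` with the rising factorial `(θ + n)ₖ`. Since
`|f⁽ᵐ⁾(0)| ≤ ‖f‖_a aᵐ`, the binomial series `∑ₖ (θ + n)ₖ xᵏ / k! = (1 - x)^(-θ-n)` at `x = at`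
bounds `∑ₖ |(tᵏ/k! Δ_θᵏ f)⁽ⁿ⁾(0)|` by `‖f‖_a (1 - at)^(-θ) bⁿ`. So the double series
`∑ₙ,ₖ zⁿ/n! (tᵏ/k! Δ_θᵏ f)⁽ⁿ⁾(0)` converges absolutely for every `z`. Summing it over `n` first
gives the Taylor series of each term, hence `exp(tΔ_θ) f (z)`; summing over `k` first gives an
entire power series, whose coefficients are therefore the Taylor coefficients of `exp(tΔ_θ) f`.
-/

open scoped Nat

theorem Ring.choose_add_sub_one_eq_ascPochhammer_eval_div {R : Type*} [Field R] [CharZero R]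
    (r : R) (n : ℕ) :
    Ring.choose (r + n - 1) n = (ascPochhammer R n).eval r / n ! := by
  rw [Ring.choose_eq_smul, Polynomial.descPochhammer_smeval_eq_ascPochhammer,
    Polynomial.ascPochhammer_smeval_eq_eval, smul_eq_mul, inv_mul_eq_div]
  congr 2
  ring

theorem Real.hasSum_ascPochhammer_eval_div_factorial_mul_pow (r : ℝ) {x : ℝ} (hx : |x| < 1) :
    HasSum (fun k : ℕ => (ascPochhammer ℝ k).eval r / k ! * x ^ k) ((1 - x) ^ (-r)) := by
  have h := (Real.one_div_one_sub_rpow_hasFPowerSeriesOnBall_zero r).hasSum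
    (y := x) (by simpa [enorm_eq_nnnorm, ← NNReal.coe_lt_coe] using hx)
  simp only [FormalMultilinearSeries.ofScalars_apply_eq, smul_eq_mul, zero_add,
    Ring.choose_add_sub_one_eq_ascPochhammer_eval_div] at h
  rwa [Real.rpow_neg (by linarith [abs_lt.mp hx]), inv_eq_one_div]

theorem ascPochhammer_eval_nonneg {S : Type*} [Semiring S] [PartialOrder S] [IsOrderedRing S]
    {r : S} (hr : 0 ≤ r) (k : ℕ) :
    0 ≤ (ascPochhammer S k).eval r := by
  induction k with
  | zero => simp
  | succ k ih => rw [ascPochhammer_succ_eval]; positivity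

theorem hasSum_ascPochhammer_add_natCast_mul_pow {θ x : ℝ} (hx0 : 0 ≤ x) (hx1 : x < 1)
    (c a : ℝ) (n : ℕ) :
    HasSum (fun k => c * a ^ n * ((ascPochhammer ℝ k).eval (θ + n) / k ! * x ^ k))
      (c * (1 - x) ^ (-θ) * (a / (1 - x)) ^ n) := by
  have hsum := (Real.hasSum_ascPochhammer_eval_div_factorial_mul_pow (θ + n)
    (abs_lt.mpr ⟨by linarith, hx1⟩)).mul_left (c * a ^ n)
  have hval : c * a ^ n * (1 - x) ^ (-(θ + n)) = c * (1 - x) ^ (-θ) * (a / (1 - x)) ^ n := by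
    rw [neg_add, Real.rpow_add (by linarith), Real.rpow_neg (by linarith) (n : ℝ),
      Real.rpow_natCast, div_pow]
    ring
  rwa [hval] at hsum

theorem iteratedDeriv_zero_eq_factorial_mul_of_hasSum {F : ℂ → ℂ} {c : ℕ → ℂ}
    (hF : ∀ z, HasSum (fun n => c n * z ^ n) (F z)) (n : ℕ) :
    iteratedDeriv n F 0 = n ! * c n := by
  set p := FormalMultilinearSeries.ofScalars ℂ c
  have hp : p.radius = ⊤ := ENNReal.eq_top_of_forall_nnreal_le fun r =>
    p.le_radius_of_tendsto (l := 0) <| by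
      simpa [p, FormalMultilinearSeries.ofScalars_norm] using
        (hF r).summable.tendsto_atTop_zero.norm
  have hFp : HasFPowerSeriesOnBall F p 0 ⊤ :=
    ⟨hp.ge, ENNReal.zero_lt_top, fun {y} _ => by
      simpa [p, FormalMultilinearSeries.ofScalars_apply_eq, mul_comm] using hF y⟩
  simpa [p, FormalMultilinearSeries.ofScalars_apply_eq, iteratedDeriv_eq_iteratedFDeriv]
    using (hFp.factorial_smul 1 n).symm

section TermwiseTaylor

variable {g : ℕ → ℂ → ℂ} {w : ℕ → ℕ → ℝ} {B : ℕ → ℝ}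

theorem summable_taylor_prod (hgw : ∀ n k, ‖iteratedDeriv n (g k) 0‖ ≤ w n k)
    (hw : ∀ n, HasSum (w n) (B n)) (hB : ∀ r, Summable fun n => B n * r ^ n / n !) (z : ℂ) :
    Summable fun p : ℕ × ℕ => (p.1 ! : ℂ)⁻¹ * z ^ p.1 * iteratedDeriv p.1 (g p.2) 0 := by
  have hw0 : ∀ n k, 0 ≤ w n k := fun n k => (norm_nonneg _).trans (hgw n k)
  refine Summable.of_norm_bounded (g := fun p => ‖z‖ ^ p.1 / p.1 ! * w p.1 p.2) ?_ fun p => ?_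
  · have hnonneg : 0 ≤ fun p : ℕ × ℕ => ‖z‖ ^ p.1 / p.1 ! * w p.1 p.2 := fun p =>
      mul_nonneg (by positivity) (hw0 p.1 p.2)
    refine (summable_prod_of_nonneg hnonneg).mpr
      ⟨fun n => (hw n).summable.mul_left (‖z‖ ^ n / n !), ?_⟩
    have hrow : ∀ n, ∑' k, ‖z‖ ^ n / n ! * w n k = B n * ‖z‖ ^ n / n ! := fun n => by
      rw [tsum_mul_left, (hw n).tsum_eq]; ring
    simpa only [hrow] using hB ‖z‖
  · rw [norm_mul, norm_mul, norm_inv, norm_pow, Complex.norm_natCast, div_eq_inv_mul]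
    gcongr
    exact hgw p.1 p.2

theorem hasSum_taylor_tsum (hg : ∀ k, Differentiable ℂ (g k))
    (hgw : ∀ n k, ‖iteratedDeriv n (g k) 0‖ ≤ w n k)
    (hw : ∀ n, HasSum (w n) (B n)) (hB : ∀ r, Summable fun n => B n * r ^ n / n !) (z : ℂ) :
    Summable (fun k => g k z) ∧
      HasSum (fun n => (n ! : ℂ)⁻¹ * (∑' k, iteratedDeriv n (g k) 0) * z ^ n) (∑' k, g k z) := by
  set Ψ : ℕ × ℕ → ℂ := fun p => (p.1 ! : ℂ)⁻¹ * z ^ p.1 * iteratedDeriv p.1 (g p.2) 0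
  have hΨ : Summable Ψ := summable_taylor_prod hgw hw hB z
  have hcols : HasSum (fun k => g k z) (∑' p, Ψ p) := by
    rw [← (Equiv.prodComm ℕ ℕ).tsum_eq Ψ]
    refine hΨ.prod_symm.hasSum.prod_fiberwise fun k => ?_
    simpa [Ψ, smul_eq_mul, mul_assoc] using Complex.hasSum_taylorSeries_of_entire (hg k) 0 z
  have hrows : HasSum (fun n => (n ! : ℂ)⁻¹ * (∑' k, iteratedDeriv n (g k) 0) * z ^ n)
      (∑' p, Ψ p) := by
    refine hΨ.hasSum.prod_fiberwise fun n => ?_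
    have hrow : ∑' k, Ψ (n, k) = (n ! : ℂ)⁻¹ * (∑' k, iteratedDeriv n (g k) 0) * z ^ n := by
      simp only [Ψ, tsum_mul_left, mul_right_comm]
    exact hrow ▸ (hΨ.prod_factor n).hasSum
  exact ⟨hcols.summable, hcols.tsum_eq ▸ hrows⟩

theorem iteratedDeriv_tsum_zero (hg : ∀ k, Differentiable ℂ (g k))
    (hgw : ∀ n k, ‖iteratedDeriv n (g k) 0‖ ≤ w n k)
    (hw : ∀ n, HasSum (w n) (B n)) (hB : ∀ r, Summable fun n => B n * r ^ n / n !) (n : ℕ) :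
    iteratedDeriv n (fun z => ∑' k, g k z) 0 = ∑' k, iteratedDeriv n (g k) 0 := by
  rw [iteratedDeriv_zero_eq_factorial_mul_of_hasSum
      (fun z => (hasSum_taylor_tsum hg hgw hw hB z).2),
    ← mul_assoc, mul_inv_cancel₀ (mod_cast n.factorial_ne_zero), one_mul]

theorem norm_iteratedDeriv_tsum_zero_le (hg : ∀ k, Differentiable ℂ (g k))
    (hgw : ∀ n k, ‖iteratedDeriv n (g k) 0‖ ≤ w n k)
    (hw : ∀ n, HasSum (w n) (B n)) (hB : ∀ r, Summable fun n => B n * r ^ n / n !) (n : ℕ) :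
    ‖iteratedDeriv n (fun z => ∑' k, g k z) 0‖ ≤ B n := by
  rw [iteratedDeriv_tsum_zero hg hgw hw hB]
  exact tsum_of_norm_bounded (hw n) (hgw n)

end TermwiseTaylor

theorem iteratedDeriv_fun_id_mul_zero {𝕜 : Type*} [NontriviallyNormedField 𝕜] {h : 𝕜 → 𝕜}
    {n : ℕ} (hh : ContDiffAt 𝕜 n h 0) :
    iteratedDeriv n (fun z => z * h z) 0 = n * iteratedDeriv (n - 1) h 0 := by
  rw [iteratedDeriv_fun_mul (f := fun z => z) contDiffAt_id hh]
  simp +contextual [iteratedDeriv_fun_id_zero]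

section Dop

variable {θ : ℝ} {g : ℂ → ℂ}

theorem Differentiable.dop (hg : Differentiable ℂ g) : Differentiable ℂ (Dop θ g) := by
  have := hg.deriv
  have := hg.deriv.deriv
  unfold Dop
  fun_prop

theorem Differentiable.iterate_dop (hg : Differentiable ℂ g) (k : ℕ) :
    Differentiable ℂ ((Dop θ)^[k] g) := by
  induction k with
  | zero => exact hg
  | succ k ih => rw [Function.iterate_succ_apply']; exact ih.dop

theorem iteratedDeriv_dop_zero (hg : Differentiable ℂ g) (n : ℕ) :
    iteratedDeriv n (Dop θ g) 0 = (θ + n) * iteratedDeriv (n + 1) g 0 := by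
  have h1 := hg.deriv.contDiff (n := n)
  have h2 := hg.deriv.deriv.contDiff (n := n)
  unfold Dop
  rw [iteratedDeriv_fun_add (f := fun z => (θ : ℂ) * deriv g z)
      (g := fun z => z * deriv (deriv g) z) (contDiff_const.mul h1).contDiffAt
      (contDiff_id.mul h2).contDiffAt,
    iteratedDeriv_const_mul_field, iteratedDeriv_fun_id_mul_zero h2.contDiffAt]
  rcases n with _ | n
  · simp
  · rw [Nat.add_sub_cancel, ← iteratedDeriv_succ', ← iteratedDeriv_succ', ← iteratedDeriv_succ']
    push_cast
    ring

theorem iteratedDeriv_iterate_dop_zero (hg : Differentiable ℂ g) (k n : ℕ) :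
    iteratedDeriv n ((Dop θ)^[k] g) 0 =
      (ascPochhammer ℝ k).eval (θ + n) * iteratedDeriv (n + k) g 0 := by
  induction k generalizing g with
  | zero => simp
  | succ k ih =>
    rw [Function.iterate_succ_apply, ih hg.dop, ← add_assoc, iteratedDeriv_dop_zero hg,
      ascPochhammer_succ_eval]
    push_cast
    ring

end Dop

theorem norm_iteratedDeriv_le_entNorm_mul_pow {a : ℝ} (ha : 0 < a) {f : ℂ → ℂ}
    (hfa : BddAbove (Set.range fun k : ℕ => a⁻¹ ^ k * ‖iteratedDeriv k f 0‖)) (n : ℕ) :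
    ‖iteratedDeriv n f 0‖ ≤ entNorm a f * a ^ n := by
  have h := le_ciSup hfa n
  rwa [inv_pow, inv_mul_le_iff₀ (by positivity), mul_comm] at h

theorem norm_iteratedDeriv_const_mul_iterate_dop_le {θ a t : ℝ} (hθ : 0 ≤ θ) (ha : 0 < a)
    (ht : 0 ≤ t) {f : ℂ → ℂ} (hf : Differentiable ℂ f)
    (hfa : BddAbove (Set.range fun k : ℕ => a⁻¹ ^ k * ‖iteratedDeriv k f 0‖)) (n k : ℕ) :
    ‖iteratedDeriv n (fun z => ((t ^ k / k ! : ℝ) : ℂ) * (Dop θ)^[k] f z) 0‖ ≤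
      entNorm a f * a ^ n * ((ascPochhammer ℝ k).eval (θ + n) / k ! * (a * t) ^ k) := by
  have hP := ascPochhammer_eval_nonneg (by positivity : 0 ≤ θ + n) k
  rw [iteratedDeriv_const_mul_field, iteratedDeriv_iterate_dop_zero hf, norm_mul, norm_mul,
    Complex.norm_real, Complex.norm_real, Real.norm_of_nonneg (by positivity),
    Real.norm_of_nonneg hP]
  calc t ^ k / k ! * ((ascPochhammer ℝ k).eval (θ + n) * ‖iteratedDeriv (n + k) f 0‖)
      ≤ t ^ k / k ! * ((ascPochhammer ℝ k).eval (θ + n) * (entNorm a f * a ^ (n + k))) := by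
        gcongr
        exact norm_iteratedDeriv_le_entNorm_mul_pow ha hfa _
    _ = _ := by rw [pow_add, mul_pow]; ring

/-- For entire f with ‖f‖_a < ∞, t > 0 with a t < 1 and b = a/(1-at), the series
exp(tΔ_θ)f = ∑ (t^k/k!) Δ_θ^k f converges pointwise and
‖exp(tΔ_θ)f‖_b ≤ (1-at)^{-θ} ‖f‖_a. -/
theorem stmt7 (θ a t : ℝ) (hθ : 0 ≤ θ) (ha : 0 < a) (ht : 0 < t) (hat : a * t < 1)
    (f : ℂ → ℂ) (hf : Differentiable ℂ f)
    (hfa : BddAbove (Set.range fun k : ℕ => a⁻¹ ^ k * ‖iteratedDeriv k f 0‖)) :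
    (∀ z : ℂ, Summable (fun k : ℕ => ((t ^ k / k.factorial : ℝ) : ℂ) * (Dop θ)^[k] f z)) ∧
    BddAbove (Set.range fun k : ℕ => (a / (1 - a * t))⁻¹ ^ k *
      ‖iteratedDeriv k
        (fun z => ∑' m : ℕ, ((t ^ m / m.factorial : ℝ) : ℂ) * (Dop θ)^[m] f z) 0‖) ∧
    entNorm (a / (1 - a * t))
        (fun z => ∑' m : ℕ, ((t ^ m / m.factorial : ℝ) : ℂ) * (Dop θ)^[m] f z)
      ≤ (1 - a * t) ^ (-θ) * entNorm a f := by
  set b := a / (1 - a * t)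
  set K := entNorm a f * (1 - a * t) ^ (-θ)
  have hb : 0 < b := div_pos ha (by linarith)
  have hg k : Differentiable ℂ fun z => ((t ^ k / k ! : ℝ) : ℂ) * (Dop θ)^[k] f z :=
    (hf.iterate_dop k).const_mul _
  have hgw := norm_iteratedDeriv_const_mul_iterate_dop_le hθ ha ht.le hf hfa
  have hw := hasSum_ascPochhammer_add_natCast_mul_pow (θ := θ) (by positivity) hat (entNorm a f) a
  have hB (r : ℝ) : Summable fun n => K * b ^ n * r ^ n / n ! := by
    simpa only [mul_pow, mul_assoc, mul_div_assoc] using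
      (Real.summable_pow_div_factorial (b * r)).mul_left K
  have hbound n : b⁻¹ ^ n * ‖iteratedDeriv n
      (fun z => ∑' m : ℕ, ((t ^ m / m ! : ℝ) : ℂ) * (Dop θ)^[m] f z) 0‖ ≤ K := by
    rw [inv_pow, inv_mul_le_iff₀ (by positivity), mul_comm]
    exact norm_iteratedDeriv_tsum_zero_le hg hgw hw hB n
  refine ⟨fun z => (hasSum_taylor_tsum hg hgw hw hB z).1, ⟨K, ?_⟩, ?_⟩
  · rintro _ ⟨n, rfl⟩
    exact hbound n
  · rw [mul_comm]
    exact ciSup_le hbound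
end

section
/- Let δ ≥ 2 integer, λ > 0, and suppose a bounded sequence (φ_n) ⊂ [1, Φ] (for some Φ > 1) satisfies φ_n - κ_n φ_{n-1} → 0 where κ_n = δ^{-λ}/(1 - (1-δ^{-λ})φ_{n-1}). Then any accumulation point a ∈ [1, Φ] of (φ_n) satisfies a = δ^{-λ}a/(1 - (1-δ^{-λ})a); since λ > 0 the only solution in [1, Φ] is a = 1, hence φ_n → 1. -/
open Filter

/-- Identification of the limit at criticality: if (φ_n) ⊂ [1, Φ] and
φ_n - κ_n φ_{n-1} → 0 with κ_{n+1} = δ^{-λ}/(1-(1-δ^{-λ})φ_n), then every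
accumulation point a ∈ [1, Φ] solves a = δ^{-λ}a/(1-(1-δ^{-λ})a), the only such
solution in [1, Φ] is a = 1, hence φ_n → 1. -/
theorem stmt17 (lam : ℝ) (δ : ℕ) (hlam : 0 < lam) (hδ : 2 ≤ δ) (Φ : ℝ) (hΦ : 1 < Φ)
    (φ : ℕ → ℝ) (hmem : ∀ n, φ n ∈ Set.Icc 1 Φ)
    (hlim : Filter.Tendsto
      (fun n => φ (n + 1) -
        ((δ : ℝ) ^ (-lam) / (1 - (1 - (δ : ℝ) ^ (-lam)) * φ n)) * φ n)
      Filter.atTop (nhds 0)) :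
    (∀ a ∈ Set.Icc (1 : ℝ) Φ, MapClusterPt a Filter.atTop φ →
      a = (δ : ℝ) ^ (-lam) * a / (1 - (1 - (δ : ℝ) ^ (-lam)) * a) ∧ a = 1) ∧
    Filter.Tendsto φ Filter.atTop (nhds 1) := by
  have hδ1 : (1:ℝ) < (δ:ℝ) := by exact_mod_cast lt_of_lt_of_le one_lt_two hδ
  set r : ℝ := (δ : ℝ) ^ (-lam) with hrdef
  have hr0 : 0 < r := Real.rpow_pos_of_pos (by linarith) _
  have hr1 : r < 1 := Real.rpow_lt_one_of_one_lt_of_neg hδ1 (by linarith)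
  set d : ℕ → ℝ := fun n => 1 - (1 - r) * φ n with hd
  set s : ℕ → ℝ := fun n => φ (n + 1) - (r / d n) * φ n with hs
  have hslim : Tendsto s atTop (nhds 0) := hlim
  set u : ℕ → ℝ := fun n => φ (n + 1) * d n - r * φ n with hu
  -- eventually d n ≠ 0, hence u n = s n * d n
  have hev : ∀ᶠ n in atTop, |s n| < 1 / 2 := by
    have := (Metric.tendsto_atTop.1 hslim) (1/2) (by norm_num)
    obtain ⟨N, hN⟩ := this
    refine eventually_atTop.2 ⟨N, fun n hn => ?_⟩
    simpa [Real.dist_eq] using hN n hn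
  have hse : ∀ᶠ n in atTop, u n = s n * d n := by
    refine hev.mono fun n hn => ?_
    by_cases h : d n = 0
    · exfalso
      have h1 := (hmem (n + 1)).1
      have : s n = φ (n + 1) := by simp [hs, h]
      rw [this] at hn
      have := le_abs_self (φ (n + 1))
      linarith
    · show φ (n + 1) * d n - r * φ n = (φ (n + 1) - r / d n * φ n) * d n
      field_simp
  -- u tends to 0
  have hulim : Tendsto u atTop (nhds 0) := by
    have hdb : ∀ n, |d n| ≤ 1 + Φ := by
      intro n
      have h1 := (hmem n).1
      have h2 := (hmem n).2
      have : |d n| ≤ |(1:ℝ)| + |(1 - r) * φ n| := abs_sub _ _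
      have h3 : |(1 - r) * φ n| ≤ Φ := by
        rw [abs_mul]
        have : |1 - r| ≤ 1 := by rw [abs_of_nonneg (by linarith)]; linarith
        have h4 : |φ n| ≤ Φ := by rw [abs_of_nonneg (by linarith)]; exact h2
        calc |1 - r| * |φ n| ≤ 1 * Φ :=
              mul_le_mul this h4 (abs_nonneg _) zero_le_one
          _ = Φ := one_mul Φ
      simp only [abs_one] at this
      linarith
    have hb : ∀ᶠ n in atTop, ‖u n‖ ≤ (1 + Φ) * |s n| := by
      refine hse.mono fun n hn => ?_
      rw [hn, Real.norm_eq_abs, abs_mul]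
      have := hdb n
      have := abs_nonneg (s n)
      nlinarith
    have hg : Tendsto (fun n => (1 + Φ) * |s n|) atTop (nhds 0) := by
      have : Tendsto (fun n => |s n|) atTop (nhds 0) := by
        simpa using hslim.abs
      simpa using this.const_mul (1 + Φ)
    exact squeeze_zero_norm' hb hg
  -- key backward inequality
  have key : ∀ n, φ n - 1 ≤ r * (φ (n + 1) - 1) + |u n| := by
    intro n
    have h1 := (hmem n).1
    have h2 := (hmem (n + 1)).1
    have habs : -u n ≤ |u n| := neg_le_abs _
    have hprod : 0 ≤ (1 - r) * (φ n - 1) * (φ (n + 1) - 1) := by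
      apply mul_nonneg (mul_nonneg (by linarith) (by linarith)) (by linarith)
    have hueq : u n = φ (n + 1) * (1 - (1 - r) * φ n) - r * φ n := rfl
    nlinarith [hprod, habs, hueq]
  -- iterated inequality
  have iter : ∀ k n, φ n - 1 ≤
      r ^ k * (Φ - 1) + ∑ j ∈ Finset.range k, r ^ j * |u (n + j)| := by
    intro k
    induction k with
    | zero =>
      intro n
      have := (hmem n).2
      simpa using by linarith
    | succ k ih =>
      intro n
      have h1 := key n
      have h2 := ih (n + 1)
      have h3 : r * (φ (n + 1) - 1) ≤
          r * (r ^ k * (Φ - 1) + ∑ j ∈ Finset.range k, r ^ j * |u (n + 1 + j)|) :=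
        mul_le_mul_of_nonneg_left h2 hr0.le
      have hsum : ∑ j ∈ Finset.range (k + 1), r ^ j * |u (n + j)| =
          (∑ j ∈ Finset.range k, r ^ (j + 1) * |u (n + (j + 1))|) + r ^ 0 * |u (n + 0)| :=
        Finset.sum_range_succ' _ _
      have hmulsum : r * ∑ j ∈ Finset.range k, r ^ j * |u (n + 1 + j)| =
          ∑ j ∈ Finset.range k, r ^ (j + 1) * |u (n + (j + 1))| := by
        rw [Finset.mul_sum]
        refine Finset.sum_congr rfl fun j _ => ?_
        rw [show n + 1 + j = n + (j + 1) by omega]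
        ring
      calc φ n - 1 ≤ r * (φ (n + 1) - 1) + |u n| := h1
        _ ≤ r * (r ^ k * (Φ - 1) + ∑ j ∈ Finset.range k, r ^ j * |u (n + 1 + j)|) + |u n| := by
            linarith
        _ = r ^ (k + 1) * (Φ - 1) +
            ((∑ j ∈ Finset.range k, r ^ (j + 1) * |u (n + (j + 1))|) + r ^ 0 * |u (n + 0)|) := by
            rw [mul_add, hmulsum]; simp [pow_succ]; ring
        _ = r ^ (k + 1) * (Φ - 1) + ∑ j ∈ Finset.range (k + 1), r ^ j * |u (n + j)| := by
            rw [hsum]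
  -- convergence of φ to 1
  have htend : Tendsto φ atTop (nhds 1) := by
    rw [Metric.tendsto_atTop]
    intro ε hε
    have h1r : 0 < 1 - r := by linarith
    have hε' : 0 < ε / 2 * (1 - r) := by positivity
    obtain ⟨N, hN⟩ := (Metric.tendsto_atTop.1 hulim) (ε / 2 * (1 - r)) hε'
    have hΦ1 : 0 < Φ - 1 := by linarith
    obtain ⟨k, hk⟩ := exists_pow_lt_of_lt_one (show 0 < ε / 2 / (Φ - 1) by positivity) hr1
    refine ⟨N, fun n hn => ?_⟩
    have hk' : r ^ k * (Φ - 1) < ε / 2 := by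
      calc r ^ k * (Φ - 1) < ε / 2 / (Φ - 1) * (Φ - 1) :=
            mul_lt_mul_of_pos_right hk hΦ1
        _ = ε / 2 := div_mul_cancel₀ _ hΦ1.ne'
    have hsum : ∑ j ∈ Finset.range k, r ^ j * |u (n + j)| ≤ ε / 2 := by
      have hterm : ∀ j ∈ Finset.range k, r ^ j * |u (n + j)| ≤ r ^ j * (ε / 2 * (1 - r)) := by
        intro j _
        apply mul_le_mul_of_nonneg_left _ (pow_nonneg hr0.le _)
        have := hN (n + j) (le_trans hn (Nat.le_add_right n j))
        rw [Real.dist_eq, sub_zero] at this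
        linarith
      have hgs : (∑ j ∈ Finset.range k, r ^ j) * (1 - r) ≤ 1 := by
        have := geom_sum_mul r k
        have heq : (∑ j ∈ Finset.range k, r ^ j) * (1 - r) = 1 - r ^ k := by
          have := geom_sum_mul r k
          nlinarith [this]
        rw [heq]
        have : 0 ≤ r ^ k := pow_nonneg hr0.le _
        linarith
      calc ∑ j ∈ Finset.range k, r ^ j * |u (n + j)|
          ≤ ∑ j ∈ Finset.range k, r ^ j * (ε / 2 * (1 - r)) :=
            Finset.sum_le_sum hterm
        _ = (∑ j ∈ Finset.range k, r ^ j) * (ε / 2 * (1 - r)) := by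
            rw [← Finset.sum_mul]
        _ ≤ ε / 2 := by
            have hpos : (0:ℝ) ≤ ∑ j ∈ Finset.range k, r ^ j :=
              Finset.sum_nonneg fun j _ => pow_nonneg hr0.le j
            nlinarith [mul_le_mul_of_nonneg_left hgs (le_of_lt (half_pos hε)), hpos]
    have h1 := (hmem n).1
    have := iter k n
    rw [Real.dist_eq, abs_of_nonneg (by linarith : (0:ℝ) ≤ φ n - 1)]
    linarith
  refine ⟨fun a ha hcp => ?_, htend⟩
  have ha1 : a = 1 := by
    have hcl : ClusterPt a (map φ atTop) := hcp
    have hcl1 : ClusterPt a (nhds 1) := hcl.mono htend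
    exact eq_of_nhds_neBot hcl1
  subst ha1
  refine ⟨?_, rfl⟩
  have : 1 - (1 - r) * (1:ℝ) = r := by ring
  rw [mul_one, this, div_self hr0.ne']
end
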